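/- Let A be a real m×n matrix with no zero row and let b ∈ ℝ^m. Let x⁰ ∈ ℝⁿ be arbitrary and let x⁰_* be the unique least-squares solution of Ax = b with x⁰_* − x⁰ ∈ Range(Aᵀ) (explicitly, x⁰_* = A†b + (I − A†A)x⁰, i.e. AᵀA x⁰_* = Aᵀ b and x⁰_* − x⁰ ∈ Range(Aᵀ)). Run the RKAS iteration: at step k a row index i_k is drawn independently with probability ‖A_{i_k,:}‖₂²/‖A‖_F², and x^{k+1} = x^k − α_k A_{i_k,:}ᵀ with α_k = ⟨A A_{i_k,:}ᵀ, A x^k − b⟩ / ‖A A_{i_k,:}ᵀ‖₂². Then for every k ≥ 0, E[‖x^k − x⁰_*‖₂²] ≤ σ_min(A)⁻² · (1 − σ_min(A)⁴/(‖A‖₂² ‖A‖_F²))^k · ‖A x⁰ − A x⁰_*‖₂², where E[g(x^k)] = ∑_{(i_0,…,i_{k−1}) ∈ [m]^k} (∏_{j<k} ‖A_{i_j,:}‖₂²/‖A‖_F²) · g(x^k(i_0,…,i_{k−1})). -/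

import Mathlib

open Matrix
open scoped RealInnerProductSpace

/-- `mulE A x` is the matrix-vector product `A x`, viewed as a map between
Euclidean spaces (so that `‖·‖` is the Euclidean norm and `⟪·,·⟫` the dot product). -/
noncomputable def mulE {m n : ℕ} (A : Matrix (Fin m) (Fin n) ℝ)
    (x : EuclideanSpace ℝ (Fin n)) : EuclideanSpace ℝ (Fin m) :=
  Matrix.toEuclideanLin A x

/-- `rowE A i` is the `i`-th row of `A` (i.e. the vector `A_{i,:}ᵀ`),
viewed as an element of Euclidean space. -/
noncomputable def rowE {m n : ℕ} (A : Matrix (Fin m) (Fin n) ℝ) (i : Fin m) :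
    EuclideanSpace ℝ (Fin n) :=
  (EuclideanSpace.equiv (Fin n) ℝ).symm (A i)

/-- One step of the RKAS method: `x⁺ = x − α A_{i,:}ᵀ` with the adaptive
stepsize `α = ⟨A A_{i,:}ᵀ, A x − b⟩ / ‖A A_{i,:}ᵀ‖²`. -/
noncomputable def rkasStep {m n : ℕ} (A : Matrix (Fin m) (Fin n) ℝ)
    (b : EuclideanSpace ℝ (Fin m)) (x : EuclideanSpace ℝ (Fin n)) (i : Fin m) :
    EuclideanSpace ℝ (Fin n) :=
  x - (⟪mulE A (rowE A i), mulE A x - b⟫ / ‖mulE A (rowE A i)‖ ^ 2) • rowE A i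

/-- `frobSq A = ‖A‖_F²`, the squared Frobenius norm of `A`. -/
noncomputable def frobSq {m n : ℕ} (A : Matrix (Fin m) (Fin n) ℝ) : ℝ :=
  ∑ i, ∑ j, A i j ^ 2

/-- `rkasSeq A b x0 k s` is the RKAS iterate `x^k` obtained from the initial
point `x0` using the row indices `s = (i_0, …, i_{k-1}) ∈ [m]^k`. -/
noncomputable def rkasSeq {m n : ℕ} (A : Matrix (Fin m) (Fin n) ℝ)
    (b : EuclideanSpace ℝ (Fin m)) (x0 : EuclideanSpace ℝ (Fin n)) :
    (k : ℕ) → (Fin k → Fin m) → EuclideanSpace ℝ (Fin n)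
  | 0, _ => x0
  | k + 1, s => rkasStep A b (rkasSeq A b x0 k fun j => s j.castSucc) (s (Fin.last k))

lemma mulE_adj {m n : ℕ} (A : Matrix (Fin m) (Fin n) ℝ)
    (u : EuclideanSpace ℝ (Fin m)) (v : EuclideanSpace ℝ (Fin n)) :
    ⟪mulE Aᵀ u, v⟫ = ⟪u, mulE A v⟫ := by
  have h : Aᵀ = Aᴴ := by
    ext i j; simp [Matrix.conjTranspose_apply]
  rw [mulE, mulE, h, Matrix.toEuclideanLin_conjTranspose_eq_adjoint,
    LinearMap.adjoint_inner_left]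

lemma mulE_sub {m n : ℕ} (A : Matrix (Fin m) (Fin n) ℝ)
    (x y : EuclideanSpace ℝ (Fin n)) : mulE A (x - y) = mulE A x - mulE A y := by
  simp [mulE]

lemma mulE_smul {m n : ℕ} (A : Matrix (Fin m) (Fin n) ℝ) (c : ℝ)
    (x : EuclideanSpace ℝ (Fin n)) : mulE A (c • x) = c • mulE A x := by
  simp [mulE]

lemma rowE_eq {m n : ℕ} (A : Matrix (Fin m) (Fin n) ℝ) (i : Fin m) :
    rowE A i = mulE Aᵀ (EuclideanSpace.single i 1) := by
  ext j
  simp [rowE, mulE, Matrix.toEuclideanLin_apply, Matrix.mulVec, dotProduct,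
    EuclideanSpace.single_apply]

lemma inner_rowE {m n : ℕ} (A : Matrix (Fin m) (Fin n) ℝ) (i : Fin m)
    (v : EuclideanSpace ℝ (Fin n)) : ⟪rowE A i, v⟫ = mulE A v i := by
  rw [rowE_eq, mulE_adj]
  simp [PiLp.inner_apply, EuclideanSpace.single_apply]

lemma sum_inner_rowE_sq {m n : ℕ} (A : Matrix (Fin m) (Fin n) ℝ)
    (v : EuclideanSpace ℝ (Fin n)) : ∑ i, ⟪rowE A i, v⟫ ^ 2 = ‖mulE A v‖ ^ 2 := by
  simp only [inner_rowE]
  rw [← real_inner_self_eq_norm_sq]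
  simp only [PiLp.inner_apply, RCLike.inner_apply, conj_trivial, sq]

lemma frobSq_eq {m n : ℕ} (A : Matrix (Fin m) (Fin n) ℝ) :
    frobSq A = ∑ i, ‖rowE A i‖ ^ 2 := by
  unfold frobSq
  congr 1; ext i
  rw [← real_inner_self_eq_norm_sq]
  simp only [PiLp.inner_apply, RCLike.inner_apply, conj_trivial, rowE, sq]
  rfl

lemma rowE_ne_zero {m n : ℕ} {A : Matrix (Fin m) (Fin n) ℝ} {i : Fin m}
    (h : A i ≠ 0) : rowE A i ≠ 0 := by
  intro hc
  apply h
  ext j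
  have h2 : (rowE A i) j = 0 := by rw [hc]; rfl
  simpa [rowE] using h2

lemma proj_norm_sq {E : Type*} [NormedAddCommGroup E] [InnerProductSpace ℝ E]
    (u z : E) (hu : u ≠ 0) :
    ‖z - (⟪u, z⟫ / ‖u‖ ^ 2) • u‖ ^ 2 = ‖z‖ ^ 2 - ⟪u, z⟫ ^ 2 / ‖u‖ ^ 2 := by
  have hun : ‖u‖ ≠ 0 := norm_ne_zero_iff.mpr hu
  rw [norm_sub_sq_real, inner_smul_right, norm_smul, real_inner_comm z u]
  rw [mul_pow, Real.norm_eq_abs, sq_abs]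
  have h2 : ‖u‖ ^ 2 ≠ 0 := pow_ne_zero 2 hun
  field_simp
  ring

lemma mulE_add {m n : ℕ} (A : Matrix (Fin m) (Fin n) ℝ)
    (x y : EuclideanSpace ℝ (Fin n)) : mulE A (x + y) = mulE A x + mulE A y := by
  simp [mulE]

section Main

variable {m n : ℕ} (A : Matrix (Fin m) (Fin n) ℝ)
  (b : EuclideanSpace ℝ (Fin m)) (x0 xstar : EuclideanSpace ℝ (Fin n))

-- range is closed under add / neg / smul
lemma range_add {u v : EuclideanSpace ℝ (Fin n)}
    (hu : u ∈ Set.range (mulE Aᵀ)) (hv : v ∈ Set.range (mulE Aᵀ)) :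
    u + v ∈ Set.range (mulE Aᵀ) := by
  obtain ⟨p, hp⟩ := hu; obtain ⟨q, hq⟩ := hv
  exact ⟨p + q, by rw [mulE_add, hp, hq]⟩

lemma range_neg {u : EuclideanSpace ℝ (Fin n)} (hu : u ∈ Set.range (mulE Aᵀ)) :
    -u ∈ Set.range (mulE Aᵀ) := by
  obtain ⟨p, hp⟩ := hu
  exact ⟨-p, by simp [mulE, hp.symm]⟩

lemma range_smul (c : ℝ) {u : EuclideanSpace ℝ (Fin n)} (hu : u ∈ Set.range (mulE Aᵀ)) :
    c • u ∈ Set.range (mulE Aᵀ) := by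
  obtain ⟨p, hp⟩ := hu
  exact ⟨c • p, by rw [mulE_smul, hp]⟩

lemma rowE_mem (i : Fin m) : rowE A i ∈ Set.range (mulE Aᵀ) :=
  ⟨EuclideanSpace.single i 1, (rowE_eq A i).symm⟩

-- step residual formula
lemma step_residual (hxstar_normal : mulE Aᵀ (mulE A xstar) = mulE Aᵀ b)
    (x : EuclideanSpace ℝ (Fin n)) (i : Fin m) :
    mulE A (rkasStep A b x i) - mulE A xstar =
      (mulE A x - mulE A xstar) -
        (⟪mulE A (rowE A i), mulE A x - mulE A xstar⟫ / ‖mulE A (rowE A i)‖ ^ 2) •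
          mulE A (rowE A i) := by
  have key : ⟪mulE A (rowE A i), mulE A x - b⟫
      = ⟪mulE A (rowE A i), mulE A x - mulE A xstar⟫ := by
    have h0 : mulE Aᵀ (mulE A xstar - b) = 0 := by
      rw [mulE_sub, hxstar_normal, sub_self]
    have : ⟪mulE A (rowE A i), mulE A xstar - b⟫ = 0 := by
      have hAA : ⟪mulE A (rowE A i), mulE A xstar - b⟫
          = ⟪rowE A i, mulE Aᵀ (mulE A xstar - b)⟫ := by
        nth_rewrite 1 [← Matrix.transpose_transpose A]
        exact mulE_adj Aᵀ _ _
      rw [hAA, h0, inner_zero_right]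
    have hsplit : (mulE A x - b) = (mulE A x - mulE A xstar) + (mulE A xstar - b) := by
      abel
    rw [hsplit, inner_add_right, this, add_zero]
  rw [rkasStep, mulE_sub, mulE_smul, key]
  abel


lemma inner_mulE_left (v : EuclideanSpace ℝ (Fin n)) (w : EuclideanSpace ℝ (Fin m)) :
    ⟪mulE A v, w⟫ = ⟪v, mulE Aᵀ w⟫ := by
  nth_rewrite 1 [← Matrix.transpose_transpose A]
  exact mulE_adj Aᵀ _ _

end Main

section Spectral

variable {m n : ℕ} {A : Matrix (Fin m) (Fin n) ℝ}
  {σmin nA : ℝ}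

lemma frobSq_pos (hA : A ≠ 0) : 0 < frobSq A := by
  have : ∃ i j, A i j ≠ 0 := by
    by_contra h
    push_neg at h
    exact hA (by ext i j; exact h i j)
  obtain ⟨i, j, hij⟩ := this
  unfold frobSq
  apply Finset.sum_pos' (fun i _ => Finset.sum_nonneg fun j _ => sq_nonneg _)
  refine ⟨i, Finset.mem_univ i, Finset.sum_pos' (fun j _ => sq_nonneg _) ?_⟩
  exact ⟨j, Finset.mem_univ j, by positivity⟩

lemma nA_pos (hσ_pos : 0 < σmin)
    (hσ_att : ∃ z ∈ Set.range (mulE Aᵀ), z ≠ 0 ∧ ‖mulE A z‖ = σmin * ‖z‖)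
    (hnA_ub : ∀ z, ‖mulE A z‖ ≤ nA * ‖z‖) : 0 < nA := by
  obtain ⟨z, _, hz0, hz⟩ := hσ_att
  have hzp : 0 < ‖z‖ := norm_pos_iff.mpr hz0
  have := hnA_ub z
  rw [hz] at this
  nlinarith

lemma sq_le_frobSq (hσ_pos : 0 < σmin)
    (hσ_att : ∃ z ∈ Set.range (mulE Aᵀ), z ≠ 0 ∧ ‖mulE A z‖ = σmin * ‖z‖) :
    σmin ^ 2 ≤ frobSq A := by
  obtain ⟨z, _, hz0, hz⟩ := hσ_att
  have hzp : 0 < ‖z‖ := norm_pos_iff.mpr hz0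
  have h1 : ‖mulE A z‖ ^ 2 = ∑ i, ⟪rowE A i, z⟫ ^ 2 := (sum_inner_rowE_sq A z).symm
  have h2 : ∑ i, ⟪rowE A i, z⟫ ^ 2 ≤ (∑ i, ‖rowE A i‖ ^ 2) * ‖z‖ ^ 2 := by
    rw [Finset.sum_mul]
    apply Finset.sum_le_sum
    intro i _
    have := abs_real_inner_le_norm (rowE A i) z
    calc ⟪rowE A i, z⟫ ^ 2 = |⟪rowE A i, z⟫| ^ 2 := (sq_abs _).symm
      _ ≤ (‖rowE A i‖ * ‖z‖) ^ 2 := by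
          apply pow_le_pow_left₀ (abs_nonneg _) this
      _ = ‖rowE A i‖ ^ 2 * ‖z‖ ^ 2 := by ring
  rw [hz, mul_pow] at h1
  rw [← frobSq_eq] at h2
  have h3 : σmin ^ 2 * ‖z‖ ^ 2 ≤ frobSq A * ‖z‖ ^ 2 := by linarith
  exact le_of_mul_le_mul_right h3 (by positivity)

lemma sigma_le_nA (hσ_pos : 0 < σmin)
    (hσ_att : ∃ z ∈ Set.range (mulE Aᵀ), z ≠ 0 ∧ ‖mulE A z‖ = σmin * ‖z‖)
    (hnA_ub : ∀ z, ‖mulE A z‖ ≤ nA * ‖z‖) : σmin ≤ nA := by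
  obtain ⟨z, _, hz0, hz⟩ := hσ_att
  have hzp : 0 < ‖z‖ := norm_pos_iff.mpr hz0
  have := hnA_ub z
  rw [hz] at this
  exact le_of_mul_le_mul_right this hzp

lemma rate_nonneg (hA : A ≠ 0) (hσ_pos : 0 < σmin)
    (hσ_att : ∃ z ∈ Set.range (mulE Aᵀ), z ≠ 0 ∧ ‖mulE A z‖ = σmin * ‖z‖)
    (hnA_ub : ∀ z, ‖mulE A z‖ ≤ nA * ‖z‖) :
    0 ≤ 1 - σmin ^ 4 / (nA ^ 2 * frobSq A) := by
  have h1 := sq_le_frobSq hσ_pos hσ_att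
  have h2 := sigma_le_nA hσ_pos hσ_att hnA_ub
  have h3 := nA_pos hσ_pos hσ_att hnA_ub
  have h4 := frobSq_pos hA
  have hσ2 : σmin ^ 2 ≤ nA ^ 2 := by nlinarith
  have h5 : σmin ^ 4 ≤ nA ^ 2 * frobSq A := by
    have : σmin ^ 4 = σmin ^ 2 * σmin ^ 2 := by ring
    rw [this]
    exact mul_le_mul hσ2 h1 (sq_nonneg _) (by positivity)
  have h6 : 0 < nA ^ 2 * frobSq A := by positivity
  have := div_le_one_of_le₀ h5 (le_of_lt h6)
  linarith

lemma AT_lower (hσ_lb : ∀ z ∈ Set.range (mulE Aᵀ), σmin * ‖z‖ ≤ ‖mulE A z‖)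
    (hσ_pos : 0 < σmin)
    {w : EuclideanSpace ℝ (Fin n)} (hw : w ∈ Set.range (mulE Aᵀ)) :
    σmin * ‖mulE A w‖ ≤ ‖mulE Aᵀ (mulE A w)‖ := by
  rcases eq_or_ne (mulE A w) 0 with h | h
  · simp [h]
  · have hAwp : 0 < ‖mulE A w‖ := norm_pos_iff.mpr h
    have h1 : ‖mulE A w‖ ^ 2 = ⟪w, mulE Aᵀ (mulE A w)⟫ := by
      rw [← inner_mulE_left, real_inner_self_eq_norm_sq]
    have h2 : ⟪w, mulE Aᵀ (mulE A w)⟫ ≤ ‖w‖ * ‖mulE Aᵀ (mulE A w)‖ :=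
      real_inner_le_norm _ _
    have h3 : σmin * ‖w‖ ≤ ‖mulE A w‖ := hσ_lb w hw
    nlinarith [norm_nonneg (mulE Aᵀ (mulE A w)), norm_nonneg w]

end Spectral

section Step

variable {m n : ℕ} {A : Matrix (Fin m) (Fin n) ℝ} {σmin nA : ℝ}
  {b : EuclideanSpace ℝ (Fin m)} {xstar : EuclideanSpace ℝ (Fin n)}

lemma step_expect
    (hA : A ≠ 0) (hrows : ∀ i, A i ≠ 0)
    (hxstar_normal : mulE Aᵀ (mulE A xstar) = mulE Aᵀ b)
    (hσ_pos : 0 < σmin)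
    (hσ_lb : ∀ z ∈ Set.range (mulE Aᵀ), σmin * ‖z‖ ≤ ‖mulE A z‖)
    (hnA_ub : ∀ z, ‖mulE A z‖ ≤ nA * ‖z‖)
    (hnA_pos : 0 < nA)
    (x : EuclideanSpace ℝ (Fin n)) (hx : x - xstar ∈ Set.range (mulE Aᵀ)) :
    ∑ i, ‖rowE A i‖ ^ 2 / frobSq A * ‖mulE A (rkasStep A b x i) - mulE A xstar‖ ^ 2
      ≤ (1 - σmin ^ 4 / (nA ^ 2 * frobSq A)) * ‖mulE A x - mulE A xstar‖ ^ 2 := by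
  have hF := frobSq_pos hA
  set z := mulE A x - mulE A xstar with hzdef
  have hune : ∀ i : Fin m, mulE A (rowE A i) ≠ 0 := by
    intro i
    have h1 : (0:ℝ) < ‖rowE A i‖ := norm_pos_iff.mpr (rowE_ne_zero (hrows i))
    have h2 := hσ_lb (rowE A i) (rowE_mem A i)
    intro hc
    rw [hc, norm_zero] at h2
    nlinarith
  have hterm : ∀ i : Fin m,
      ‖mulE A (rkasStep A b x i) - mulE A xstar‖ ^ 2
        = ‖z‖ ^ 2 - ⟪mulE A (rowE A i), z⟫ ^ 2 / ‖mulE A (rowE A i)‖ ^ 2 := by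
    intro i
    rw [step_residual A b xstar hxstar_normal x i, ← hzdef]
    exact proj_norm_sq _ _ (hune i)
  have hp1 : ∑ i : Fin m, ‖rowE A i‖ ^ 2 / frobSq A = 1 := by
    rw [← Finset.sum_div, ← frobSq_eq, div_self (ne_of_gt hF)]
  have hsum1 : ∑ i, ‖rowE A i‖ ^ 2 / frobSq A *
        ‖mulE A (rkasStep A b x i) - mulE A xstar‖ ^ 2
      = ‖z‖ ^ 2 - ∑ i, ‖rowE A i‖ ^ 2 / frobSq A *
          (⟪mulE A (rowE A i), z⟫ ^ 2 / ‖mulE A (rowE A i)‖ ^ 2) := by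
    simp only [hterm, mul_sub]
    rw [Finset.sum_sub_distrib, ← Finset.sum_mul, hp1, one_mul]
  have hlb : ∀ i : Fin m, ⟪mulE A (rowE A i), z⟫ ^ 2 / (nA ^ 2 * frobSq A)
      ≤ ‖rowE A i‖ ^ 2 / frobSq A *
          (⟪mulE A (rowE A i), z⟫ ^ 2 / ‖mulE A (rowE A i)‖ ^ 2) := by
    intro i
    have hr : (0:ℝ) < ‖rowE A i‖ := norm_pos_iff.mpr (rowE_ne_zero (hrows i))
    have hu : (0:ℝ) < ‖mulE A (rowE A i)‖ := norm_pos_iff.mpr (hune i)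
    have hub : ‖mulE A (rowE A i)‖ ^ 2 ≤ nA ^ 2 * ‖rowE A i‖ ^ 2 := by
      have := hnA_ub (rowE A i)
      nlinarith [norm_nonneg (mulE A (rowE A i))]
    have key : 1 / (nA ^ 2 * frobSq A)
        ≤ ‖rowE A i‖ ^ 2 / (frobSq A * ‖mulE A (rowE A i)‖ ^ 2) := by
      rw [div_le_div_iff₀ (by positivity) (by positivity)]
      nlinarith
    calc ⟪mulE A (rowE A i), z⟫ ^ 2 / (nA ^ 2 * frobSq A)
        = ⟪mulE A (rowE A i), z⟫ ^ 2 * (1 / (nA ^ 2 * frobSq A)) := by ring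
      _ ≤ ⟪mulE A (rowE A i), z⟫ ^ 2 *
            (‖rowE A i‖ ^ 2 / (frobSq A * ‖mulE A (rowE A i)‖ ^ 2)) :=
          mul_le_mul_of_nonneg_left key (sq_nonneg _)
      _ = ‖rowE A i‖ ^ 2 / frobSq A *
            (⟪mulE A (rowE A i), z⟫ ^ 2 / ‖mulE A (rowE A i)‖ ^ 2) := by ring
  have hsum2 : ∑ i, ⟪mulE A (rowE A i), z⟫ ^ 2 = ‖mulE A (mulE Aᵀ z)‖ ^ 2 := by
    simp only [fun i : Fin m => inner_mulE_left A (rowE A i) z]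
    exact sum_inner_rowE_sq A _
  have hz2 : z = mulE A (x - xstar) := by rw [mulE_sub]
  have hchain : σmin ^ 4 * ‖z‖ ^ 2 ≤ ‖mulE A (mulE Aᵀ z)‖ ^ 2 := by
    have h1 : σmin * ‖z‖ ≤ ‖mulE Aᵀ z‖ := by
      rw [hz2]
      exact AT_lower hσ_lb hσ_pos hx
    have h2 : σmin * ‖mulE Aᵀ z‖ ≤ ‖mulE A (mulE Aᵀ z)‖ :=
      hσ_lb _ ⟨z, rfl⟩
    have h3 : σmin ^ 2 * ‖z‖ ≤ ‖mulE A (mulE Aᵀ z)‖ := by nlinarith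
    have h4 := pow_le_pow_left₀ (by positivity : (0:ℝ) ≤ σmin ^ 2 * ‖z‖) h3 2
    calc σmin ^ 4 * ‖z‖ ^ 2 = (σmin ^ 2 * ‖z‖) ^ 2 := by ring
      _ ≤ _ := h4
  have hcor : σmin ^ 4 * ‖z‖ ^ 2 / (nA ^ 2 * frobSq A)
      ≤ ∑ i, ‖rowE A i‖ ^ 2 / frobSq A *
          (⟪mulE A (rowE A i), z⟫ ^ 2 / ‖mulE A (rowE A i)‖ ^ 2) := by
    calc σmin ^ 4 * ‖z‖ ^ 2 / (nA ^ 2 * frobSq A)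
        ≤ ‖mulE A (mulE Aᵀ z)‖ ^ 2 / (nA ^ 2 * frobSq A) := by
          gcongr
      _ = ∑ i, ⟪mulE A (rowE A i), z⟫ ^ 2 / (nA ^ 2 * frobSq A) := by
          rw [← Finset.sum_div, hsum2]
      _ ≤ _ := Finset.sum_le_sum fun i _ => hlb i
  rw [hsum1]
  have hfinal : (1 - σmin ^ 4 / (nA ^ 2 * frobSq A)) * ‖z‖ ^ 2
      = ‖z‖ ^ 2 - σmin ^ 4 * ‖z‖ ^ 2 / (nA ^ 2 * frobSq A) := by ring
  rw [hfinal]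
  linarith

end Step

section Induct

variable {m n : ℕ} {A : Matrix (Fin m) (Fin n) ℝ} {σmin nA : ℝ}
  {b : EuclideanSpace ℝ (Fin m)} {x0 xstar : EuclideanSpace ℝ (Fin n)}

lemma rkasSeq_mem (hxstar_mem : xstar - x0 ∈ Set.range (mulE Aᵀ)) :
    ∀ k (s : Fin k → Fin m), rkasSeq A b x0 k s - xstar ∈ Set.range (mulE Aᵀ)
  | 0, s => by
    have := range_neg A hxstar_mem
    simpa [rkasSeq] using this
  | k + 1, s => by
    have ih := rkasSeq_mem hxstar_mem k (fun j => s j.castSucc)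
    set y := rkasSeq A b x0 k (fun j => s j.castSucc) with hy
    set i := s (Fin.last k)
    set c := ⟪mulE A (rowE A i), mulE A y - b⟫ / ‖mulE A (rowE A i)‖ ^ 2
    have h1 := range_add A ih (range_smul A (-c) (rowE_mem A i))
    have h2 : rkasSeq A b x0 (k + 1) s - xstar = y - xstar + -c • rowE A i := by
      show rkasStep A b y i - xstar = _
      rw [rkasStep]
      module
    rw [h2]
    exact h1

lemma resid_bound
    (hA : A ≠ 0) (hrows : ∀ i, A i ≠ 0)
    (hxstar_normal : mulE Aᵀ (mulE A xstar) = mulE Aᵀ b)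
    (hxstar_mem : xstar - x0 ∈ Set.range (mulE Aᵀ))
    (hσ_pos : 0 < σmin)
    (hσ_lb : ∀ z ∈ Set.range (mulE Aᵀ), σmin * ‖z‖ ≤ ‖mulE A z‖)
    (hσ_att : ∃ z ∈ Set.range (mulE Aᵀ), z ≠ 0 ∧ ‖mulE A z‖ = σmin * ‖z‖)
    (hnA_ub : ∀ z, ‖mulE A z‖ ≤ nA * ‖z‖) :
    ∀ k : ℕ, ∑ s : Fin k → Fin m,
        (∏ j, ‖rowE A (s j)‖ ^ 2 / frobSq A) *
          ‖mulE A (rkasSeq A b x0 k s) - mulE A xstar‖ ^ 2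
      ≤ (1 - σmin ^ 4 / (nA ^ 2 * frobSq A)) ^ k *
          ‖mulE A x0 - mulE A xstar‖ ^ 2
  | 0 => by
    simp [rkasSeq]
  | k + 1 => by
    have ih := resid_bound hA hrows hxstar_normal hxstar_mem hσ_pos hσ_lb hσ_att
      hnA_ub k
    have hnA_pos : 0 < nA := nA_pos hσ_pos hσ_att hnA_ub
    have hrate := rate_nonneg hA hσ_pos hσ_att hnA_ub
    set rate := 1 - σmin ^ 4 / (nA ^ 2 * frobSq A) with hr
    -- reindex the sum via snoc
    have hre : ∑ s : Fin (k + 1) → Fin m,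
          (∏ j, ‖rowE A (s j)‖ ^ 2 / frobSq A) *
            ‖mulE A (rkasSeq A b x0 (k + 1) s) - mulE A xstar‖ ^ 2
        = ∑ s : Fin k → Fin m, ∑ i : Fin m,
            ((∏ j, ‖rowE A (s j)‖ ^ 2 / frobSq A) * (‖rowE A i‖ ^ 2 / frobSq A)) *
              ‖mulE A (rkasStep A b (rkasSeq A b x0 k s) i) - mulE A xstar‖ ^ 2 := by
      rw [← Fintype.sum_equiv (Fin.snocEquiv (fun _ => Fin m))
        (fun p => ((∏ j, ‖rowE A ((Fin.snoc p.2 p.1 : Fin (k+1) → Fin m) j)‖ ^ 2 / frobSq A) *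
            ‖mulE A (rkasSeq A b x0 (k + 1) (Fin.snoc p.2 p.1)) - mulE A xstar‖ ^ 2))
        _ (fun p => rfl)]
      rw [Fintype.sum_prod_type]
      rw [Finset.sum_comm]
      apply Finset.sum_congr rfl
      intro s _
      apply Finset.sum_congr rfl
      intro i _
      have hcast : (fun j : Fin k => (Fin.snoc s i : Fin (k+1) → Fin m) j.castSucc) = s := by
        funext j
        simp [Fin.snoc_castSucc]
      have hseq : rkasSeq A b x0 (k + 1) (Fin.snoc s i) =
          rkasStep A b (rkasSeq A b x0 k s) i := by
        simp only [rkasSeq, hcast, Fin.snoc_last]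
      have hprod : (∏ j, ‖rowE A ((Fin.snoc s i : Fin (k+1) → Fin m) j)‖ ^ 2 / frobSq A)
          = (∏ j, ‖rowE A (s j)‖ ^ 2 / frobSq A) * (‖rowE A i‖ ^ 2 / frobSq A) := by
        rw [Fin.prod_univ_castSucc]
        simp [Fin.snoc_castSucc, Fin.snoc_last]
      rw [hseq, hprod]
    rw [hre]
    have hstep : ∀ s : Fin k → Fin m,
        ∑ i : Fin m,
            ((∏ j, ‖rowE A (s j)‖ ^ 2 / frobSq A) * (‖rowE A i‖ ^ 2 / frobSq A)) *
              ‖mulE A (rkasStep A b (rkasSeq A b x0 k s) i) - mulE A xstar‖ ^ 2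
          ≤ (∏ j, ‖rowE A (s j)‖ ^ 2 / frobSq A) *
              (rate * ‖mulE A (rkasSeq A b x0 k s) - mulE A xstar‖ ^ 2) := by
      intro s
      have hF := frobSq_pos hA
      have hpnn : 0 ≤ ∏ j, ‖rowE A (s j)‖ ^ 2 / frobSq A :=
        Finset.prod_nonneg fun j _ => div_nonneg (sq_nonneg _) hF.le
      have hse := step_expect hA hrows hxstar_normal hσ_pos hσ_lb hnA_ub hnA_pos
        (rkasSeq A b x0 k s) (rkasSeq_mem hxstar_mem k s)
      calc ∑ i : Fin m,
            ((∏ j, ‖rowE A (s j)‖ ^ 2 / frobSq A) * (‖rowE A i‖ ^ 2 / frobSq A)) *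
              ‖mulE A (rkasStep A b (rkasSeq A b x0 k s) i) - mulE A xstar‖ ^ 2
          = (∏ j, ‖rowE A (s j)‖ ^ 2 / frobSq A) *
              ∑ i : Fin m, (‖rowE A i‖ ^ 2 / frobSq A) *
                ‖mulE A (rkasStep A b (rkasSeq A b x0 k s) i) - mulE A xstar‖ ^ 2 := by
            rw [Finset.mul_sum]
            apply Finset.sum_congr rfl
            intro i _
            ring
        _ ≤ _ := mul_le_mul_of_nonneg_left hse hpnn
    calc ∑ s : Fin k → Fin m, ∑ i : Fin m,
            ((∏ j, ‖rowE A (s j)‖ ^ 2 / frobSq A) * (‖rowE A i‖ ^ 2 / frobSq A)) *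
              ‖mulE A (rkasStep A b (rkasSeq A b x0 k s) i) - mulE A xstar‖ ^ 2
        ≤ ∑ s : Fin k → Fin m, (∏ j, ‖rowE A (s j)‖ ^ 2 / frobSq A) *
            (rate * ‖mulE A (rkasSeq A b x0 k s) - mulE A xstar‖ ^ 2) :=
          Finset.sum_le_sum fun s _ => hstep s
      _ = rate * ∑ s : Fin k → Fin m, (∏ j, ‖rowE A (s j)‖ ^ 2 / frobSq A) *
            ‖mulE A (rkasSeq A b x0 k s) - mulE A xstar‖ ^ 2 := by
          rw [Finset.mul_sum]
          apply Finset.sum_congr rfl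
          intro s _
          ring
      _ ≤ rate * (rate ^ k * ‖mulE A x0 - mulE A xstar‖ ^ 2) :=
          mul_le_mul_of_nonneg_left ih hrate
      _ = rate ^ (k + 1) * ‖mulE A x0 - mulE A xstar‖ ^ 2 := by ring

end Induct

/-- Remark, arbitrary initial point: for the RKAS method started
at an arbitrary `x⁰`, with `x⁰_* = A†b + (I − A†A)x⁰` the unique least-squares
solution with `x⁰_* − x⁰ ∈ Range(Aᵀ)`,
`E[‖x^k − x⁰_*‖²] ≤ σ_min(A)⁻² (1 − σ_min(A)⁴/(‖A‖₂² ‖A‖_F²))^k ‖A x⁰ − A x⁰_*‖²`. -/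
theorem rkas_error_convergence_general_init (m n : ℕ) (A : Matrix (Fin m) (Fin n) ℝ)
    (hA : A ≠ 0) (hrows : ∀ i, A i ≠ 0)
    (b : EuclideanSpace ℝ (Fin m))
    -- the arbitrary initial point
    (x0 : EuclideanSpace ℝ (Fin n))
    -- `x⁰_*`: the unique least-squares solution with `x⁰_* − x⁰ ∈ Range(Aᵀ)`
    (xstar : EuclideanSpace ℝ (Fin n))
    (hxstar_normal : mulE Aᵀ (mulE A xstar) = mulE Aᵀ b)
    (hxstar_mem : xstar - x0 ∈ Set.range (mulE Aᵀ))
    -- `σ_min(A)`: the smallest nonzero singular value of `A`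
    (σmin : ℝ) (hσ_pos : 0 < σmin)
    (hσ_lb : ∀ z ∈ Set.range (mulE Aᵀ), σmin * ‖z‖ ≤ ‖mulE A z‖)
    (hσ_att : ∃ z ∈ Set.range (mulE Aᵀ), z ≠ 0 ∧ ‖mulE A z‖ = σmin * ‖z‖)
    -- `nA = ‖A‖₂`: the spectral norm of `A`
    (nA : ℝ) (hnA_ub : ∀ z, ‖mulE A z‖ ≤ nA * ‖z‖)
    (hnA_att : ∃ z : EuclideanSpace ℝ (Fin n), z ≠ 0 ∧ ‖mulE A z‖ = nA * ‖z‖)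
    (k : ℕ) :
    ∑ s : Fin k → Fin m,
        (∏ j, ‖rowE A (s j)‖ ^ 2 / frobSq A) *
          ‖rkasSeq A b x0 k s - xstar‖ ^ 2
      ≤ (σmin ^ 2)⁻¹ * (1 - σmin ^ 4 / (nA ^ 2 * frobSq A)) ^ k *
          ‖mulE A x0 - mulE A xstar‖ ^ 2 := by
  have hF := frobSq_pos hA
  have hσ2 : (0:ℝ) < σmin ^ 2 := by positivity
  have key := resid_bound hA hrows hxstar_normal hxstar_mem hσ_pos hσ_lb hσ_att
    hnA_ub k
  have hterm : ∀ s : Fin k → Fin m,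
      (∏ j, ‖rowE A (s j)‖ ^ 2 / frobSq A) * ‖rkasSeq A b x0 k s - xstar‖ ^ 2
        ≤ (σmin ^ 2)⁻¹ * ((∏ j, ‖rowE A (s j)‖ ^ 2 / frobSq A) *
            ‖mulE A (rkasSeq A b x0 k s) - mulE A xstar‖ ^ 2) := by
    intro s
    have hpnn : 0 ≤ ∏ j, ‖rowE A (s j)‖ ^ 2 / frobSq A :=
      Finset.prod_nonneg fun j _ => div_nonneg (sq_nonneg _) hF.le
    have hmem := rkasSeq_mem (b := b) hxstar_mem k s
    have h1 := hσ_lb _ hmem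
    have h2 : ‖rkasSeq A b x0 k s - xstar‖ ^ 2
        ≤ (σmin ^ 2)⁻¹ * ‖mulE A (rkasSeq A b x0 k s) - mulE A xstar‖ ^ 2 := by
      rw [← mulE_sub]
      have h3 : σmin ^ 2 * ‖rkasSeq A b x0 k s - xstar‖ ^ 2
          ≤ ‖mulE A (rkasSeq A b x0 k s - xstar)‖ ^ 2 := by
        have h4 := pow_le_pow_left₀
          (by positivity : (0:ℝ) ≤ σmin * ‖rkasSeq A b x0 k s - xstar‖) h1 2
        calc σmin ^ 2 * ‖rkasSeq A b x0 k s - xstar‖ ^ 2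
            = (σmin * ‖rkasSeq A b x0 k s - xstar‖) ^ 2 := by ring
          _ ≤ _ := h4
      calc ‖rkasSeq A b x0 k s - xstar‖ ^ 2
          = (σmin ^ 2)⁻¹ * (σmin ^ 2 * ‖rkasSeq A b x0 k s - xstar‖ ^ 2) := by
            field_simp
        _ ≤ _ := mul_le_mul_of_nonneg_left h3 (inv_nonneg.mpr hσ2.le)
    calc (∏ j, ‖rowE A (s j)‖ ^ 2 / frobSq A) * ‖rkasSeq A b x0 k s - xstar‖ ^ 2
        ≤ (∏ j, ‖rowE A (s j)‖ ^ 2 / frobSq A) *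
            ((σmin ^ 2)⁻¹ * ‖mulE A (rkasSeq A b x0 k s) - mulE A xstar‖ ^ 2) :=
          mul_le_mul_of_nonneg_left h2 hpnn
      _ = _ := by ring
  calc ∑ s : Fin k → Fin m,
        (∏ j, ‖rowE A (s j)‖ ^ 2 / frobSq A) * ‖rkasSeq A b x0 k s - xstar‖ ^ 2
      ≤ ∑ s : Fin k → Fin m, (σmin ^ 2)⁻¹ *
          ((∏ j, ‖rowE A (s j)‖ ^ 2 / frobSq A) *
            ‖mulE A (rkasSeq A b x0 k s) - mulE A xstar‖ ^ 2) :=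
        Finset.sum_le_sum fun s _ => hterm s
    _ = (σmin ^ 2)⁻¹ * ∑ s : Fin k → Fin m,
          (∏ j, ‖rowE A (s j)‖ ^ 2 / frobSq A) *
            ‖mulE A (rkasSeq A b x0 k s) - mulE A xstar‖ ^ 2 := by
        rw [Finset.mul_sum]
    _ ≤ (σmin ^ 2)⁻¹ * ((1 - σmin ^ 4 / (nA ^ 2 * frobSq A)) ^ k *
          ‖mulE A x0 - mulE A xstar‖ ^ 2) :=
        mul_le_mul_of_nonneg_left key (inv_nonneg.mpr hσ2.le)
    _ = _ := by ring
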